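/- Let M ∈ GL_{n+4}(ℤ) satisfy MᵗS₁M = S₁, let R ∈ Mat_{n+4}(ℝ) be symmetric positive definite, let X ∈ Mat₂(ℝ) be symmetric, and let Y ∈ Mat₂(ℝ) be symmetric positive definite. Then ∑_{ℓ ∈ Mat_{n+4,2}(ℤ)} exp(πi·tr(ℓᵗS₁ℓ·X) − π·tr(ℓᵗ(M⁻¹)ᵗRM⁻¹ℓ·Y)) = ∑_{ℓ ∈ Mat_{n+4,2}(ℤ)} exp(πi·tr(ℓᵗS₁ℓ·X) − π·tr(ℓᵗRℓ·Y)), both sums being absolutely convergent. (This expresses the invariance Θ(Z, M⟨W⟩) = Θ(Z, W) of the theta series under the orthogonal modular group, using R_{M⟨W⟩} = R_W[M⁻¹].) -/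

import Mathlib

/-!
The substitution `ℓ ↦ M ℓ` permutes `Mat_{n+4,2}(ℤ)`; since `S₁[M] = S₁` it fixes the phase
`tr(S₁[ℓ] X)`, and it carries `R[M⁻¹][M ℓ]` to `R[ℓ]`, so it maps the first series termwise onto
the second. For absolute convergence, `tr(R[A] Y) = vec(A)ᵀ (Yᵀ ⊗ R) vec(A)` with `Yᵀ ⊗ R`
positive definite, so `tr(R[A] Y) ≥ c ∑ A_{ij}²` and the theta series is dominated by a product
of one-dimensional Gaussian sums.
-/

open Matrix

noncomputable section

/-- Border an `m×m` matrix `A` to the `(m+2)×(m+2)` matrix `[[0,0,1],[0,A,0],[1,0,0]]`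
(block sizes `1, m, 1`). -/
def triBorder {α : Type*} [Zero α] [One α] {m : ℕ} (A : Matrix (Fin m) (Fin m) α) :
    Matrix (Fin (m + 2)) (Fin (m + 2)) α :=
  Matrix.of fun i j =>
    if hij : 0 < i.val ∧ i.val < m + 1 ∧ 0 < j.val ∧ j.val < m + 1 then
      A ⟨i.val - 1, by omega⟩ ⟨j.val - 1, by omega⟩
    else if (i.val = 0 ∧ j.val = m + 1) ∨ (i.val = m + 1 ∧ j.val = 0) then 1 else 0

/-- `S₀ = [[0,0,1],[0,−S,0],[1,0,0]] ∈ Mat_{n+2}(ℝ)` (block sizes `1, n, 1`). -/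
def matS0 (n : ℕ) (S : Matrix (Fin n) (Fin n) ℝ) : Matrix (Fin (n + 2)) (Fin (n + 2)) ℝ :=
  triBorder (-S)

/-- `S₁ = [[0,0,1],[0,S₀,0],[1,0,0]] ∈ Mat_{n+4}(ℝ)` (block sizes `1, n+2, 1`). -/
def matS1 (n : ℕ) (S : Matrix (Fin n) (Fin n) ℝ) : Matrix (Fin (n + 4)) (Fin (n + 4)) ℝ :=
  triBorder (matS0 n S)

/-- The summand `exp(πi·tr(ℓᵀS₁ℓ·X) − π·tr(ℓᵀRℓ·Y))` of the theta series. -/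
def thetaTerm (n : ℕ) (S1 R : Matrix (Fin (n + 4)) (Fin (n + 4)) ℝ)
    (X Y : Matrix (Fin 2) (Fin 2) ℝ) (ℓ : Matrix (Fin (n + 4)) (Fin 2) ℤ) : ℂ :=
  Complex.exp
    ((Real.pi : ℂ) * Complex.I *
        ((((ℓ.map (Int.cast : ℤ → ℝ))ᵀ * S1 * ℓ.map (Int.cast : ℤ → ℝ) * X).trace : ℝ) : ℂ) -
      ((Real.pi * (((ℓ.map (Int.cast : ℤ → ℝ))ᵀ * R * ℓ.map (Int.cast : ℤ → ℝ) * Y).trace) : ℝ) : ℂ))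

open Real
open scoped Kronecker

lemma summable_exp_neg_mul_int_sq {c : ℝ} (hc : 0 < c) :
    Summable fun n : ℤ => Real.exp (-c * n ^ 2) := by
  refine (summable_pow_mul_jacobiTheta₂_term_bound 0 (div_pos hc pi_pos) 0).congr fun n => ?_
  simp only [pow_zero, mul_zero, zero_mul, sub_zero, neg_mul, one_mul, exp_eq_exp, neg_inj]
  field_simp

lemma summable_prod_fin_of_nonneg {α : Type*} {f : α → ℝ} (hf : Summable f) (hf₀ : 0 ≤ f) :
    ∀ N : ℕ, Summable fun x : Fin N → α => ∏ i, f (x i)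
  | 0 => .of_finite
  | N + 1 => by
    refine (Fin.consEquiv fun _ => α).summable_iff.mp ?_
    simpa [Function.comp_def, Fin.consEquiv, Fin.prod_univ_succ] using
      hf.mul_of_nonneg (summable_prod_fin_of_nonneg hf hf₀ N) hf₀
        fun _ => Finset.prod_nonneg fun _ _ => hf₀ _

lemma summable_exp_neg_mul_sum_sq_int {c : ℝ} (hc : 0 < c) (m k : ℕ) :
    Summable fun x : Matrix (Fin m) (Fin k) ℤ => Real.exp (-c * ∑ i, ∑ j, (x i j : ℝ) ^ 2) := by
  have hrow := summable_prod_fin_of_nonneg (summable_exp_neg_mul_int_sq hc)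
    (fun _ => (exp_pos _).le) k
  refine (summable_prod_fin_of_nonneg hrow
    (fun _ => Finset.prod_nonneg fun _ _ => (exp_pos _).le) m).congr fun x => ?_
  simp only [Finset.mul_sum, Real.exp_sum]

/-- `c` is the minimum of `f` on the unit sphere, which is compact. -/
lemma exists_pos_mul_norm_sq_le {E : Type*} [NormedAddCommGroup E] [NormedSpace ℝ E]
    [FiniteDimensional ℝ E] {f : E → ℝ} (hf : Continuous f)
    (hsmul : ∀ (t : ℝ) (x : E), f (t • x) = t ^ 2 * f x) (hpos : ∀ x ≠ 0, 0 < f x) :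
    ∃ c > 0, ∀ x, c * ‖x‖ ^ 2 ≤ f x := by
  have hzero : f 0 = 0 := by simpa using hsmul 0 0
  rcases subsingleton_or_nontrivial E with hE | hE
  · exact ⟨1, one_pos, fun x => by simp [Subsingleton.elim x 0, hzero]⟩
  obtain ⟨z, hz, hmin⟩ := (isCompact_sphere (0 : E) 1).exists_isMinOn
    (NormedSpace.sphere_nonempty.mpr zero_le_one) hf.continuousOn
  have hz1 : ‖z‖ = 1 := by simpa using hz
  refine ⟨f z, hpos z (by rintro rfl; simp at hz1), fun x => ?_⟩
  rcases eq_or_ne x 0 with rfl | hx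
  · simp [hzero]
  have hx' : ‖x‖ ≠ 0 := norm_ne_zero_iff.mpr hx
  have hunit : ‖x‖⁻¹ • x ∈ Metric.sphere (0 : E) 1 := by simp [norm_smul, hx']
  calc f z * ‖x‖ ^ 2 ≤ f (‖x‖⁻¹ • x) * ‖x‖ ^ 2 := by gcongr; exact hmin hunit
    _ = f x := by rw [hsmul]; field_simp

lemma Matrix.PosDef.exists_pos_mul_sum_sq_le {ι : Type*} [Fintype ι] {P : Matrix ι ι ℝ}
    (hP : P.PosDef) : ∃ c > 0, ∀ v : ι → ℝ, c * ∑ i, v i ^ 2 ≤ v ⬝ᵥ P *ᵥ v := by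
  obtain ⟨c, hc, h⟩ := exists_pos_mul_norm_sq_le (E := EuclideanSpace ℝ ι)
    (f := fun x => x.ofLp ⬝ᵥ P *ᵥ x.ofLp) (by fun_prop)
    (fun t x => by simp [mulVec_smul, smul_dotProduct, dotProduct_smul]; ring)
    (fun x hx => hP.dotProduct_mulVec_pos (by simpa using hx))
  refine ⟨c, hc, fun v => ?_⟩
  simpa [EuclideanSpace.real_norm_sq_eq] using h (WithLp.toLp 2 v)

lemma Matrix.trace_transpose_mul_mul_mul_eq_vec_dotProduct {α m k : Type*} [CommSemiring α]
    [Fintype m] [Fintype k] (R : Matrix m m α) (Y : Matrix k k α) (A : Matrix m k α) :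
    (Aᵀ * R * A * Y).trace = vec A ⬝ᵥ (Yᵀ ⊗ₖ R) *ᵥ vec A := by
  rw [kronecker_mulVec_vec, transpose_transpose, vec_dotProduct_vec, Matrix.mul_assoc,
    Matrix.mul_assoc, Matrix.mul_assoc]

lemma Matrix.PosDef.exists_pos_mul_sum_sq_le_trace {m k : Type*} [Fintype m] [Fintype k]
    {R : Matrix m m ℝ} {Y : Matrix k k ℝ} (hR : R.PosDef) (hY : Y.PosDef) :
    ∃ c > 0, ∀ A : Matrix m k ℝ, c * ∑ i, ∑ j, A i j ^ 2 ≤ (Aᵀ * R * A * Y).trace := by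
  obtain ⟨c, hc, h⟩ := (hY.transpose.kronecker hR).exists_pos_mul_sum_sq_le
  refine ⟨c, hc, fun A => ?_⟩
  rw [trace_transpose_mul_mul_mul_eq_vec_dotProduct]
  convert h (vec A) using 2
  rw [Fintype.sum_prod_type, Finset.sum_comm]
  rfl

lemma Matrix.map_intCast_mul {α m k l : Type*} [Ring α] [Fintype m] (A : Matrix l m ℤ)
    (B : Matrix m k ℤ) :
    (A * B).map (Int.cast : ℤ → α) = A.map (Int.cast : ℤ → α) * B.map (Int.cast : ℤ → α) :=
  Matrix.map_mul (f := Int.castRingHom α)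

def Matrix.mulLeftEquivOfIsUnitDet {m k R : Type*} [Fintype m] [DecidableEq m] [CommRing R]
    (M : Matrix m m R) (hM : IsUnit M.det) : Matrix m k R ≃ Matrix m k R where
  toFun := (M * ·)
  invFun := (M⁻¹ * ·)
  left_inv ℓ := by simp [← Matrix.mul_assoc, nonsing_inv_mul _ hM]
  right_inv ℓ := by simp [← Matrix.mul_assoc, mul_nonsing_inv _ hM]

section thetaTerm

variable {n : ℕ} (S1 R : Matrix (Fin (n + 4)) (Fin (n + 4)) ℝ) (X Y : Matrix (Fin 2) (Fin 2) ℝ)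

lemma norm_thetaTerm (ℓ : Matrix (Fin (n + 4)) (Fin 2) ℤ) :
    ‖thetaTerm n S1 R X Y ℓ‖ =
      Real.exp (-(π * ((ℓ.map (Int.cast : ℤ → ℝ))ᵀ * R * ℓ.map (Int.cast : ℤ → ℝ) * Y).trace)) := by
  rw [thetaTerm, Complex.norm_exp]
  congr 1
  simp

lemma thetaTerm_mul_left (M : Matrix (Fin (n + 4)) (Fin (n + 4)) ℤ)
    (ℓ : Matrix (Fin (n + 4)) (Fin 2) ℤ) :
    thetaTerm n S1 R X Y (M * ℓ) =
      thetaTerm n ((M.map Int.cast)ᵀ * S1 * M.map Int.cast) ((M.map Int.cast)ᵀ * R * M.map Int.cast)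
        X Y ℓ := by
  simp only [thetaTerm, map_intCast_mul, transpose_mul, Matrix.mul_assoc]

variable {R Y} in
lemma summable_thetaTerm (hR : R.PosDef) (hY : Y.PosDef) :
    Summable (thetaTerm n S1 R X Y) := by
  obtain ⟨c, hc, hle⟩ := hR.exists_pos_mul_sum_sq_le_trace hY
  refine (summable_exp_neg_mul_sum_sq_int (mul_pos pi_pos hc) _ 2).of_norm_bounded fun ℓ => ?_
  rw [norm_thetaTerm, Real.exp_le_exp, neg_mul, neg_le_neg_iff, mul_assoc]
  have h := hle (ℓ.map Int.cast)
  simp only [map_apply] at h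
  exact mul_le_mul_of_nonneg_left h pi_pos.le

end thetaTerm

theorem stmt11_general (n : ℕ) (S : Matrix (Fin n) (Fin n) ℤ)
    (M : Matrix (Fin (n + 4)) (Fin (n + 4)) ℤ) (hMunit : IsUnit M.det)
    (hM : (M.map (Int.cast : ℤ → ℝ))ᵀ * matS1 n (S.map (Int.cast : ℤ → ℝ)) *
      M.map (Int.cast : ℤ → ℝ) = matS1 n (S.map (Int.cast : ℤ → ℝ)))
    (R : Matrix (Fin (n + 4)) (Fin (n + 4)) ℝ) (hRpos : R.PosDef)
    (X : Matrix (Fin 2) (Fin 2) ℝ)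
    (Y : Matrix (Fin 2) (Fin 2) ℝ) (hYpos : Y.PosDef) :
    Summable (thetaTerm n (matS1 n (S.map (Int.cast : ℤ → ℝ)))
      (((M⁻¹).map (Int.cast : ℤ → ℝ))ᵀ * R * (M⁻¹).map (Int.cast : ℤ → ℝ)) X Y) ∧
    Summable (thetaTerm n (matS1 n (S.map (Int.cast : ℤ → ℝ))) R X Y) ∧
    ∑' ℓ : Matrix (Fin (n + 4)) (Fin 2) ℤ,
        thetaTerm n (matS1 n (S.map (Int.cast : ℤ → ℝ)))
          (((M⁻¹).map (Int.cast : ℤ → ℝ))ᵀ * R * (M⁻¹).map (Int.cast : ℤ → ℝ)) X Y ℓ =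
      ∑' ℓ : Matrix (Fin (n + 4)) (Fin 2) ℤ,
        thetaTerm n (matS1 n (S.map (Int.cast : ℤ → ℝ))) R X Y ℓ := by
  set S1 := matS1 n (S.map (Int.cast : ℤ → ℝ))
  set M' := M.map (Int.cast : ℤ → ℝ)
  set Minv := (M⁻¹).map (Int.cast : ℤ → ℝ)
  have hMinv : Minv * M' = 1 := by
    simp only [Minv, M', ← map_intCast_mul, nonsing_inv_mul _ hMunit,
      Matrix.map_one _ Int.cast_zero Int.cast_one]
  have hterm (ℓ : Matrix (Fin (n + 4)) (Fin 2) ℤ) :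
      thetaTerm n S1 (Minvᵀ * R * Minv) X Y (M * ℓ) = thetaTerm n S1 R X Y ℓ := by
    rw [thetaTerm_mul_left, hM]
    congr 1
    calc M'ᵀ * (Minvᵀ * R * Minv) * M' = (Minv * M')ᵀ * R * (Minv * M') := by
          simp only [transpose_mul, Matrix.mul_assoc]
      _ = R := by rw [hMinv, transpose_one, Matrix.one_mul, Matrix.mul_one]
  let e : Matrix (Fin (n + 4)) (Fin 2) ℤ ≃ _ := M.mulLeftEquivOfIsUnitDet hMunit
  have hsum := summable_thetaTerm S1 X hRpos hYpos
  have hcomp : thetaTerm n S1 (Minvᵀ * R * Minv) X Y ∘ e = thetaTerm n S1 R X Y := funext hterm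
  refine ⟨e.summable_iff.mp (hcomp ▸ hsum), hsum, ?_⟩
  rw [← e.tsum_eq]
  exact tsum_congr hterm

/-- **Invariance of the theta series under the orthogonal modular group.**
For `M ∈ GL_{n+4}(ℤ)` with `Mᵀ S₁ M = S₁`, `R` symmetric positive definite,
`X` symmetric and `Y` symmetric positive definite, both theta series converge
absolutely and
`∑_ℓ exp(πi·tr(S₁[ℓ]X) − π·tr(R[M⁻¹][ℓ]Y)) = ∑_ℓ exp(πi·tr(S₁[ℓ]X) − π·tr(R[ℓ]Y))`,
expressing `Θ(Z, M⟨W⟩) = Θ(Z, W)` via `R_{M⟨W⟩} = R_W[M⁻¹]`. -/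
theorem stmt11 (n : ℕ) (hn : 1 ≤ n) (S : Matrix (Fin n) (Fin n) ℤ)
    (hSsymm : S.IsSymm) (hSpos : (S.map (Int.cast : ℤ → ℝ)).PosDef)
    (hSeven : ∀ x : Fin n → ℤ, 2 ∣ x ⬝ᵥ S.mulVec x)
    (M : Matrix (Fin (n + 4)) (Fin (n + 4)) ℤ) (hMunit : IsUnit M.det)
    (hM : (M.map (Int.cast : ℤ → ℝ))ᵀ * matS1 n (S.map (Int.cast : ℤ → ℝ)) *
      M.map (Int.cast : ℤ → ℝ) = matS1 n (S.map (Int.cast : ℤ → ℝ)))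
    (R : Matrix (Fin (n + 4)) (Fin (n + 4)) ℝ) (hRsymm : R.IsSymm) (hRpos : R.PosDef)
    (X : Matrix (Fin 2) (Fin 2) ℝ) (hX : X.IsSymm)
    (Y : Matrix (Fin 2) (Fin 2) ℝ) (hYsymm : Y.IsSymm) (hYpos : Y.PosDef) :
    Summable (thetaTerm n (matS1 n (S.map (Int.cast : ℤ → ℝ)))
      (((M⁻¹).map (Int.cast : ℤ → ℝ))ᵀ * R * (M⁻¹).map (Int.cast : ℤ → ℝ)) X Y) ∧
    Summable (thetaTerm n (matS1 n (S.map (Int.cast : ℤ → ℝ))) R X Y) ∧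
    ∑' ℓ : Matrix (Fin (n + 4)) (Fin 2) ℤ,
        thetaTerm n (matS1 n (S.map (Int.cast : ℤ → ℝ)))
          (((M⁻¹).map (Int.cast : ℤ → ℝ))ᵀ * R * (M⁻¹).map (Int.cast : ℤ → ℝ)) X Y ℓ =
      ∑' ℓ : Matrix (Fin (n + 4)) (Fin 2) ℤ,
        thetaTerm n (matS1 n (S.map (Int.cast : ℤ → ℝ))) R X Y ℓ :=
  stmt11_general n S M hMunit hM R hRpos X Y hYpos

end
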